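/- Fix 0 < ε ≤ 0.001. Suppose A ∈ ℝ^{m×n} satisfies the Measurement Distribution Condition with constant ε, the noise satisfies ‖η‖ ≤ (ε/4)‖x_*‖ where y = |Ax_*| + η, and the step size satisfies 0 < α ≤ 1. Define iterates x_{t+1} = x_t − α·A_{x_t}ᵀ(|A x_t| − y). If dist(x_0, x_*) ≤ ε‖x_*‖, then for all t ≥ 1, dist(x_t, x_*) ≤ (1 − α/2)^t · dist(x_0, x_*) + 4‖η‖. -/

import Mathlib

noncomputable section
open Matrix MeasureTheory ProbabilityTheory Real

/-- Euclidean norm on `Fin n → ℝ`. -/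
def euclNorm {n : ℕ} (x : Fin n → ℝ) : ℝ := Real.sqrt (∑ i, x i ^ 2)

/-- Euclidean inner product. -/
def dotp {n : ℕ} (x y : Fin n → ℝ) : ℝ := ∑ i, x i * y i

/-- Angle between two vectors. -/
def angle' {n : ℕ} (x y : Fin n → ℝ) : ℝ :=
  Real.arccos (dotp x y / (euclNorm x * euclNorm y))

/-- Normalization `x̂ = x / ‖x‖`. -/
def unitize {n : ℕ} (x : Fin n → ℝ) : Fin n → ℝ := (euclNorm x)⁻¹ • x

/-- The symmetric matrix `M_{x̂↔ŷ}` sending `x̂ ↦ ŷ`, `ŷ ↦ x̂`, and `z ↦ 0`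
for `z ⊥ span{x,y}`. -/
def Mswap {n : ℕ} (x y : Fin n → ℝ) : Matrix (Fin n) (Fin n) ℝ :=
  let u := unitize x
  let v := unitize y
  let c := dotp u v
  if c ^ 2 = 1 then Matrix.vecMulVec u v
  else (1 / (1 - c ^ 2)) • (Matrix.vecMulVec u v + Matrix.vecMulVec v u)
       - (c / (1 - c ^ 2)) • (Matrix.vecMulVec u u + Matrix.vecMulVec v v)

/-- Operator (spectral) norm of a matrix, w.r.t. Euclidean norms. -/
def opNorm {m n : ℕ} (M : Matrix (Fin m) (Fin n) ℝ) : ℝ :=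
  ‖(LinearMap.toContinuousLinearMap (Matrix.toEuclideanLin M))‖

/-- `A_x = diag(sgn(Ax)) A` where `sgn` is applied entrywise. -/
def Asgn {m n : ℕ} (A : Matrix (Fin m) (Fin n) ℝ) (x : Fin n → ℝ) :
    Matrix (Fin m) (Fin n) ℝ :=
  Matrix.diagonal (fun i => Real.sign (A.mulVec x i)) * A

/-- `Φ_{x,y}`. -/
def Phi {n : ℕ} (x y : Fin n → ℝ) : Matrix (Fin n) (Fin n) ℝ :=
  if x ≠ 0 ∧ y ≠ 0 then
    ((π - 2 * angle' x y) / π) • (1 : Matrix (Fin n) (Fin n) ℝ)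
      + (2 * Real.sin (angle' x y) / π) • Mswap x y
  else 0

/-- The Measurement Distribution Condition with constant `ε`. -/
def MDC {m n : ℕ} (A : Matrix (Fin m) (Fin n) ℝ) (ε : ℝ) : Prop :=
  ∀ x y : Fin n → ℝ, opNorm ((Asgn A x)ᵀ * Asgn A y - Phi x y) ≤ ε

/-- `dist(x, x_*) = min(‖x - x_*‖, ‖x + x_*‖)`. -/
def pdist {n : ℕ} (x y : Fin n → ℝ) : ℝ := min (euclNorm (x - y)) (euclNorm (x + y))

section AuxToolkit

variable {n : ℕ}

lemma dotp_comm (x y : Fin n → ℝ) : dotp x y = dotp y x :=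
  Finset.sum_congr rfl fun i _ => mul_comm _ _

lemma dotp_self_nonneg (x : Fin n → ℝ) : 0 ≤ dotp x x :=
  Finset.sum_nonneg fun i _ => mul_self_nonneg _

lemma enorm_nonneg' (x : Fin n → ℝ) : 0 ≤ euclNorm x := Real.sqrt_nonneg _

lemma enorm_eq_sqrt_dotp (x : Fin n → ℝ) : euclNorm x = Real.sqrt (dotp x x) := by
  unfold euclNorm dotp
  congr 1
  exact Finset.sum_congr rfl fun i _ => pow_two (x i)

lemma sq_enorm (x : Fin n → ℝ) : euclNorm x ^ 2 = dotp x x := by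
  rw [enorm_eq_sqrt_dotp, Real.sq_sqrt (dotp_self_nonneg x)]

lemma le_of_sq_le_sq' {a b : ℝ} (ha : 0 ≤ a) (hb : 0 ≤ b) (h : a ^ 2 ≤ b ^ 2) : a ≤ b := by
  nlinarith [sq_nonneg (a - b), sq_nonneg (a + b)]

lemma enorm_pos_of_ne {x : Fin n → ℝ} (hx : x ≠ 0) : 0 < euclNorm x := by
  rcases (enorm_nonneg' x).lt_or_eq with h | h
  · exact h
  exfalso
  apply hx
  have h0 : dotp x x = 0 := by
    have := sq_enorm x
    rw [← h] at this
    simpa using this.symm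
  have h1 : ∀ i ∈ Finset.univ, x i * x i = 0 :=
    (Finset.sum_eq_zero_iff_of_nonneg (fun i _ => mul_self_nonneg (x i))).mp h0
  funext i
  exact mul_self_eq_zero.mp (h1 i (Finset.mem_univ i))

lemma dotp_add_right (x y z : Fin n → ℝ) : dotp x (y + z) = dotp x y + dotp x z := by
  simp [dotp, Pi.add_apply, mul_add, Finset.sum_add_distrib]

lemma dotp_add_left (x y z : Fin n → ℝ) : dotp (x + y) z = dotp x z + dotp y z := by
  rw [dotp_comm, dotp_add_right, dotp_comm z x, dotp_comm z y]

lemma dotp_smul_right (a : ℝ) (x y : Fin n → ℝ) : dotp x (a • y) = a * dotp x y := by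
  simp [dotp, Finset.mul_sum, mul_left_comm]

lemma dotp_smul_left (a : ℝ) (x y : Fin n → ℝ) : dotp (a • x) y = a * dotp x y := by
  rw [dotp_comm, dotp_smul_right, dotp_comm]

lemma dotp_neg_right (x y : Fin n → ℝ) : dotp x (-y) = - dotp x y := by
  simp [dotp, Finset.sum_neg_distrib]

lemma dotp_sub_right (x y z : Fin n → ℝ) : dotp x (y - z) = dotp x y - dotp x z := by
  rw [sub_eq_add_neg, dotp_add_right, dotp_neg_right, sub_eq_add_neg]

lemma dotp_sub_left (x y z : Fin n → ℝ) : dotp (x - y) z = dotp x z - dotp y z := by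
  rw [dotp_comm, dotp_sub_right, dotp_comm z x, dotp_comm z y]

lemma abs_dotp_le (x y : Fin n → ℝ) : |dotp x y| ≤ euclNorm x * euclNorm y := by
  have h := Finset.sum_mul_sq_le_sq_mul_sq Finset.univ x y
  have h1 : |dotp x y| = Real.sqrt ((dotp x y) ^ 2) := (Real.sqrt_sq_eq_abs _).symm
  rw [h1]
  unfold euclNorm
  rw [← Real.sqrt_mul (Finset.sum_nonneg fun i _ => sq_nonneg (x i))]
  exact Real.sqrt_le_sqrt h

lemma dotp_le (x y : Fin n → ℝ) : dotp x y ≤ euclNorm x * euclNorm y :=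
  (le_abs_self _).trans (abs_dotp_le x y)

lemma euclNorm_add_le (x y : Fin n → ℝ) : euclNorm (x + y) ≤ euclNorm x + euclNorm y := by
  apply le_of_sq_le_sq' (enorm_nonneg' _) (add_nonneg (enorm_nonneg' x) (enorm_nonneg' y))
  rw [sq_enorm]
  have h1 : dotp (x + y) (x + y) = dotp x x + 2 * dotp x y + dotp y y := by
    rw [dotp_add_left, dotp_add_right, dotp_add_right, dotp_comm y x]; ring
  have h2 := dotp_le x y
  have h3 := sq_enorm x
  have h4 := sq_enorm y
  nlinarith

lemma enorm_smul' (a : ℝ) (x : Fin n → ℝ) : euclNorm (a • x) = |a| * euclNorm x := by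
  unfold euclNorm
  have h1 : ∑ i, (a • x) i ^ 2 = a ^ 2 * ∑ i, x i ^ 2 := by
    simp [Pi.smul_apply, smul_eq_mul, mul_pow, Finset.mul_sum]
  rw [h1, Real.sqrt_mul (sq_nonneg a), Real.sqrt_sq_eq_abs]

lemma enorm_neg' (x : Fin n → ℝ) : euclNorm (-x) = euclNorm x := by
  unfold euclNorm; simp

lemma enorm_sub_comm' (x y : Fin n → ℝ) : euclNorm (x - y) = euclNorm (y - x) := by
  rw [← neg_sub y x, enorm_neg']

lemma euclNorm_sub_le (x y : Fin n → ℝ) : euclNorm (x - y) ≤ euclNorm x + euclNorm y := by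
  rw [sub_eq_add_neg]
  exact (euclNorm_add_le x (-y)).trans (by rw [enorm_neg'])

lemma enorm_eq_norm {k : ℕ} (w : Fin k → ℝ) :
    euclNorm w = ‖(WithLp.equiv 2 (Fin k → ℝ)).symm w‖ := by
  rw [EuclideanSpace.norm_eq]
  unfold euclNorm
  congr 1
  exact Finset.sum_congr rfl fun i _ => by
    rw [WithLp.equiv_symm_apply, PiLp.toLp_apply, Real.norm_eq_abs, sq_abs]

lemma mulVec_enorm_le {m k : ℕ} {M : Matrix (Fin m) (Fin k) ℝ} {C : ℝ}
    (h : opNorm M ≤ C) (z : Fin k → ℝ) :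
    euclNorm (M.mulVec z) ≤ C * euclNorm z := by
  have h1 : euclNorm (M.mulVec z)
      = ‖Matrix.toEuclideanLin M ((WithLp.equiv 2 (Fin k → ℝ)).symm z)‖ := by
    exact enorm_eq_norm (M.mulVec z)
  rw [h1, enorm_eq_norm z]
  calc ‖Matrix.toEuclideanLin M ((WithLp.equiv 2 (Fin k → ℝ)).symm z)‖
      = ‖(LinearMap.toContinuousLinearMap (Matrix.toEuclideanLin M))
          ((WithLp.equiv 2 (Fin k → ℝ)).symm z)‖ := by
        rw [LinearMap.coe_toContinuousLinearMap']
    _ ≤ opNorm M * ‖(WithLp.equiv 2 (Fin k → ℝ)).symm z‖ :=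
        ContinuousLinearMap.le_opNorm _ _
    _ ≤ C * ‖(WithLp.equiv 2 (Fin k → ℝ)).symm z‖ :=
        mul_le_mul_of_nonneg_right h (norm_nonneg _)

end AuxToolkit

section AuxToolkit2

variable {n : ℕ}

lemma sign_mul_self' (t : ℝ) : Real.sign t * t = |t| := by
  rcases lt_trichotomy t 0 with h | h | h
  · rw [Real.sign_of_neg h, abs_of_neg h]; ring
  · simp [h]
  · rw [Real.sign_of_pos h, abs_of_pos h]; ring

lemma Asgn_mulVec {m : ℕ} (A : Matrix (Fin m) (Fin n) ℝ) (w z : Fin n → ℝ) (i : Fin m) :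
    (Asgn A w).mulVec z i = Real.sign (A.mulVec w i) * (A.mulVec z i) := by
  unfold Asgn
  rw [← Matrix.mulVec_mulVec]
  simp [Matrix.mulVec_diagonal]

lemma dotp_transpose_mulVec {m : ℕ} (M : Matrix (Fin m) (Fin n) ℝ)
    (z : Fin n → ℝ) (w : Fin m → ℝ) :
    dotp z (Mᵀ.mulVec w) = dotp (M.mulVec z) w := by
  unfold dotp Matrix.mulVec dotProduct
  simp only [Matrix.transpose_apply, Finset.mul_sum, Finset.sum_mul]
  rw [Finset.sum_comm]
  exact Finset.sum_congr rfl fun i _ => Finset.sum_congr rfl fun j _ => by ring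

lemma vecMulVec_mulVec' (u v z : Fin n → ℝ) :
    (Matrix.vecMulVec u v).mulVec z = (dotp v z) • u := by
  funext i
  simp only [Matrix.mulVec, dotProduct, Matrix.vecMulVec_apply, Pi.smul_apply,
    smul_eq_mul, dotp, Finset.sum_mul]
  exact Finset.sum_congr rfl fun j _ => by ring

lemma weighted_cs {k : ℕ} (c ρ u : Fin k → ℝ) (hc : ∀ i, 0 ≤ c i) :
    (∑ i, c i * (ρ i * u i)) ^ 2 ≤ (∑ i, c i * ρ i ^ 2) * (∑ i, c i * u i ^ 2) := by
  have h := Finset.sum_mul_sq_le_sq_mul_sq Finset.univ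
    (fun i => Real.sqrt (c i) * ρ i) (fun i => Real.sqrt (c i) * u i)
  have e1 : ∀ i : Fin k, (Real.sqrt (c i) * ρ i) * (Real.sqrt (c i) * u i)
      = c i * (ρ i * u i) := by
    intro i
    rw [mul_mul_mul_comm, Real.mul_self_sqrt (hc i)]
  have e2 : ∀ i : Fin k, (Real.sqrt (c i) * ρ i) ^ 2 = c i * ρ i ^ 2 := by
    intro i; rw [mul_pow, Real.sq_sqrt (hc i)]
  have e3 : ∀ i : Fin k, (Real.sqrt (c i) * u i) ^ 2 = c i * u i ^ 2 := by
    intro i; rw [mul_pow, Real.sq_sqrt (hc i)]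
  calc (∑ i, c i * (ρ i * u i)) ^ 2
      = (∑ i, (Real.sqrt (c i) * ρ i) * (Real.sqrt (c i) * u i)) ^ 2 := by
        congr 1; exact Finset.sum_congr rfl fun i _ => (e1 i).symm
    _ ≤ (∑ i, (Real.sqrt (c i) * ρ i) ^ 2) * (∑ i, (Real.sqrt (c i) * u i) ^ 2) := h
    _ = (∑ i, c i * ρ i ^ 2) * (∑ i, c i * u i ^ 2) := by
        rw [show (∑ i, (Real.sqrt (c i) * ρ i) ^ 2) = ∑ i, c i * ρ i ^ 2 from
          Finset.sum_congr rfl fun i _ => e2 i,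
          show (∑ i, (Real.sqrt (c i) * u i) ^ 2) = ∑ i, c i * u i ^ 2 from
          Finset.sum_congr rfl fun i _ => e3 i]

lemma dotp_unitize_self {x : Fin n → ℝ} (hx : x ≠ 0) :
    dotp (unitize x) (unitize x) = 1 := by
  unfold unitize
  rw [dotp_smul_left, dotp_smul_right, ← sq_enorm, pow_two]
  have h := enorm_pos_of_ne hx
  field_simp

lemma enorm_unitize {x : Fin n → ℝ} (hx : x ≠ 0) : euclNorm (unitize x) = 1 := by
  rw [enorm_eq_sqrt_dotp, dotp_unitize_self hx, Real.sqrt_one]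

lemma Mswap_eq (x y : Fin n → ℝ) :
    Mswap x y =
      if (dotp (unitize x) (unitize y)) ^ 2 = 1 then
        Matrix.vecMulVec (unitize x) (unitize y)
      else (1 / (1 - (dotp (unitize x) (unitize y)) ^ 2)) •
            (Matrix.vecMulVec (unitize x) (unitize y)
              + Matrix.vecMulVec (unitize y) (unitize x))
          - ((dotp (unitize x) (unitize y)) / (1 - (dotp (unitize x) (unitize y)) ^ 2)) •
            (Matrix.vecMulVec (unitize x) (unitize x)
              + Matrix.vecMulVec (unitize y) (unitize y)) := rfl

lemma enorm_Mswap_le {x s : Fin n → ℝ} (hx : x ≠ 0) (hs : s ≠ 0) (z : Fin n → ℝ) :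
    euclNorm ((Mswap x s).mulVec z) ≤ euclNorm z := by
  set u := unitize x with hu_def
  set v := unitize s with hv_def
  have hu : dotp u u = 1 := dotp_unitize_self hx
  have hv : dotp v v = 1 := dotp_unitize_self hs
  have hun : euclNorm u = 1 := enorm_unitize hx
  have hvn : euclNorm v = 1 := enorm_unitize hs
  set c := dotp u v with hc_def
  have hcabs : |c| ≤ 1 := by
    have := abs_dotp_le u v
    rwa [hun, hvn, mul_one] at this
  have hc2 : c ^ 2 ≤ 1 := by
    rw [← sq_abs]; nlinarith [abs_nonneg c]
  rw [Mswap_eq]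
  by_cases h1 : c ^ 2 = 1
  · rw [if_pos h1, vecMulVec_mulVec', enorm_smul', hun, mul_one]
    exact (abs_dotp_le v z).trans (by rw [hvn, one_mul])
  · rw [if_neg h1]
    have hvu : dotp v u = dotp u v := dotp_comm v u
    have hzu : dotp z u = dotp u z := dotp_comm z u
    have hzv : dotp z v = dotp v z := dotp_comm z v
    set c := dotp u v with hc_def
    set p := dotp u z with hp_def
    set q := dotp v z with hq_def
    have hc' : dotp u v = c := hc_def.symm
    have hp' : dotp u z = p := hp_def.symm
    have hq' : dotp v z = q := hq_def.symm
    have hpos : 0 < 1 - c ^ 2 := lt_of_le_of_ne (by linarith) (by intro h; exact h1 (by linarith))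
    have hne : 1 - c ^ 2 ≠ 0 := ne_of_gt hpos
    set a := (q - c * p) / (1 - c ^ 2) with ha_def
    set b := (p - c * q) / (1 - c ^ 2) with hb_def
    have hMz : ((1 / (1 - c ^ 2)) • (Matrix.vecMulVec u v + Matrix.vecMulVec v u)
        - (c / (1 - c ^ 2)) • (Matrix.vecMulVec u u + Matrix.vecMulVec v v)).mulVec z
        = a • u + b • v := by
      rw [Matrix.sub_mulVec, Matrix.smul_mulVec, Matrix.smul_mulVec,
        Matrix.add_mulVec, Matrix.add_mulVec, vecMulVec_mulVec', vecMulVec_mulVec',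
        vecMulVec_mulVec', vecMulVec_mulVec', hp', hq', ha_def, hb_def]
      match_scalars <;> field_simp <;> ring
    rw [hMz]
    have hMsq : dotp (a • u + b • v) (a • u + b • v) = a ^ 2 + b ^ 2 + 2 * a * b * c := by
      simp only [dotp_add_left, dotp_add_right, dotp_smul_left, dotp_smul_right,
        hvu, hc', hu, hv]
      ring
    have hkey : b * p + a * q = a ^ 2 + b ^ 2 + 2 * a * b * c := by
      rw [ha_def, hb_def]; field_simp; ring
    have hww : 0 ≤ dotp z z - 2 * (b * p) - 2 * (a * q)
        + (a ^ 2 + b ^ 2 + 2 * a * b * c) := by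
      have h0 := dotp_self_nonneg (z - b • u - a • v)
      have hexp : dotp (z - b • u - a • v) (z - b • u - a • v)
          = dotp z z - 2 * (b * p) - 2 * (a * q)
            + (a ^ 2 + b ^ 2 + 2 * a * b * c) := by
        simp only [dotp_sub_left, dotp_sub_right, dotp_smul_left, dotp_smul_right,
          hvu, hzu, hzv, hc', hp', hq', hu, hv]
        ring
      linarith [hexp ▸ h0]
    apply le_of_sq_le_sq' (enorm_nonneg' _) (enorm_nonneg' _)
    rw [sq_enorm, sq_enorm, hMsq]
    linarith

lemma Phi_self {x : Fin n → ℝ} (hx : x ≠ 0) : Phi x x = 1 := by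
  unfold Phi
  rw [if_pos ⟨hx, hx⟩]
  have hang : angle' x x = 0 := by
    unfold angle'
    have h : dotp x x / (euclNorm x * euclNorm x) = 1 := by
      rw [← sq_enorm]
      have h := enorm_pos_of_ne hx
      field_simp [pow_two]
    rw [h, Real.arccos_one]
  rw [hang, Real.sin_zero]
  rw [show (π - 2 * 0) / π = 1 by field_simp; ring]
  norm_num

end AuxToolkit2

section SignLemmas

lemma sign_ineq1 (u v : ℝ) :
    0 ≤ Real.sign v * Real.sign v - Real.sign v * Real.sign u := by
  rcases lt_trichotomy u 0 with h | h | h <;> rcases lt_trichotomy v 0 with h' | h' | h' <;>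
    simp [Real.sign_of_neg, Real.sign_of_pos, *] <;> norm_num

lemma sign_ineq2 (u v : ℝ) :
    (Real.sign v * Real.sign v - Real.sign v * Real.sign u) * u ^ 2
      ≤ 2 * (Real.sign v * (u - v)) ^ 2 := by
  rcases lt_trichotomy u 0 with h | h | h <;> rcases lt_trichotomy v 0 with h' | h' | h' <;>
    simp [Real.sign_of_neg, Real.sign_of_pos, *] <;>
      nlinarith [sq_nonneg (u - v), sq_nonneg (v - u), sq_nonneg u, sq_nonneg v,
        mul_self_nonneg (u * v)]

lemma dotp_gram {m n : ℕ} (A : Matrix (Fin m) (Fin n) ℝ) (w₁ w₂ z₁ z₂ : Fin n → ℝ) :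
    dotp z₁ (((Asgn A w₁)ᵀ * Asgn A w₂).mulVec z₂)
      = ∑ i, (Real.sign (A.mulVec w₁ i) * A.mulVec z₁ i)
          * (Real.sign (A.mulVec w₂ i) * A.mulVec z₂ i) := by
  rw [← Matrix.mulVec_mulVec, dotp_transpose_mulVec]
  unfold dotp
  exact Finset.sum_congr rfl fun i _ => by rw [Asgn_mulVec, Asgn_mulVec]

lemma scalar_r {R dd E : ℝ} (hR : 0 ≤ R) (hdd : 0 ≤ dd) (hE0 : 0 < E) (hE1 : E ≤ 0.001)
    (h : R ^ 2 * R ^ 2 ≤ 6 * E * R ^ 2 * (2.002 * dd ^ 2)) : R ≤ 0.12 * dd := by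
  rcases eq_or_lt_of_le hR with h0 | h0
  · rw [← h0]; positivity
  · have h5 : R ^ 2 ≤ 0.013 * dd ^ 2 := by
      have h4 : R ^ 2 * R ^ 2 ≤ 0.013 * dd ^ 2 * R ^ 2 := by
        nlinarith [mul_nonneg (sq_nonneg R) (sq_nonneg dd),
          mul_le_mul_of_nonneg_right hE1 (mul_nonneg (sq_nonneg R) (sq_nonneg dd))]
      exact le_of_mul_le_mul_right h4 (by positivity)
    nlinarith [sq_nonneg (R - 0.12 * dd), sq_nonneg (R + 0.12 * dd)]

lemma noise_aux {m n : ℕ} (B : Matrix (Fin m) (Fin n) ℝ)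
    (hB : ∀ z : Fin n → ℝ, euclNorm (B.mulVec z) ^ 2 ≤ 1.001 * euclNorm z ^ 2)
    (η : Fin m → ℝ) : euclNorm (Bᵀ.mulVec η) ≤ 2 * euclNorm η := by
  have h1 : dotp (Bᵀ.mulVec η) (Bᵀ.mulVec η)
      = dotp (B.mulVec (Bᵀ.mulVec η)) η := dotp_transpose_mulVec B _ η
  have h7 : euclNorm (B.mulVec (Bᵀ.mulVec η)) ≤ 1.1 * euclNorm (Bᵀ.mulVec η) := by
    apply le_of_sq_le_sq' (enorm_nonneg' _)
      (mul_nonneg (by norm_num) (enorm_nonneg' _))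
    nlinarith [hB (Bᵀ.mulVec η), enorm_nonneg' (Bᵀ.mulVec η)]
  have h8 : euclNorm (Bᵀ.mulVec η) ^ 2 ≤ 1.1 * euclNorm (Bᵀ.mulVec η) * euclNorm η := by
    rw [sq_enorm, h1]
    calc dotp (B.mulVec (Bᵀ.mulVec η)) η
        ≤ euclNorm (B.mulVec (Bᵀ.mulVec η)) * euclNorm η := dotp_le _ _
      _ ≤ 1.1 * euclNorm (Bᵀ.mulVec η) * euclNorm η :=
          mul_le_mul_of_nonneg_right h7 (enorm_nonneg' η)
  by_cases hcase : euclNorm (Bᵀ.mulVec η) ≤ 2 * euclNorm η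
  · exact hcase
  · exfalso
    push_neg at hcase
    have hW0 : 0 < euclNorm (Bᵀ.mulVec η) :=
      lt_of_le_of_lt (mul_nonneg (by norm_num) (enorm_nonneg' η)) hcase
    nlinarith [mul_nonneg hW0.le (enorm_nonneg' η)]

lemma final_arith {α d E N : ℝ} (hα0 : 0 < α) (hα1 : α ≤ 1) (hd0 : 0 ≤ d)
    (hE0 : 0 < E) (hE1 : E ≤ 0.001) :
    (1 - α) * d + α * (E * d) + α * (0.12 * d) + α * (2 * N)
      ≤ (1 - α / 2) * d + 2 * α * N := by
  nlinarith [mul_nonneg hα0.le hd0]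

end SignLemmas

section KeyStep

set_option maxHeartbeats 1000000 in

lemma key_step {m n : ℕ} {ε : ℝ} (hε0 : 0 < ε) (hε1 : ε ≤ 0.001)
    {A : Matrix (Fin m) (Fin n) ℝ} (hAmdc : MDC A ε)
    {s : Fin n → ℝ} (hs : s ≠ 0) (η : Fin m → ℝ)
    {α : ℝ} (hα0 : 0 < α) (hα1 : α ≤ 1)
    {x : Fin n → ℝ} (hd : euclNorm (x - s) ≤ ε * euclNorm s) :
    euclNorm ((x - α • (Asgn A x)ᵀ.mulVec
        (fun i => |A.mulVec x i| - (|A.mulVec s i| + η i))) - s)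
      ≤ (1 - α / 2) * euclNorm (x - s) + 2 * α * euclNorm η := by
  set d := euclNorm (x - s) with hd_def
  have hd0 : 0 ≤ d := enorm_nonneg' _
  have hsn : 0 < euclNorm s := enorm_pos_of_ne hs
  have hx0 : x ≠ 0 := by
    intro h
    rw [hd_def, h, zero_sub, enorm_neg'] at hd
    nlinarith
  have hxpos : 0 < euclNorm x := enorm_pos_of_ne hx0
  have htri1 : euclNorm s ≤ euclNorm x + d := by
    calc euclNorm s = euclNorm (x + (s - x)) := by rw [show x + (s - x) = s by abel]
      _ ≤ euclNorm x + euclNorm (s - x) := euclNorm_add_le _ _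
      _ = euclNorm x + d := by rw [enorm_sub_comm']
  have htri2 : euclNorm x ≤ euclNorm s + d := by
    calc euclNorm x = euclNorm (s + (x - s)) := by rw [show s + (x - s) = x by abel]
      _ ≤ euclNorm s + euclNorm (x - s) := euclNorm_add_le _ _
      _ = euclNorm s + d := by rw [← hd_def]
  have hxn : (1 - ε) * euclNorm s ≤ euclNorm x := by nlinarith
  -- MDC pointwise at (x,x)
  have hGxx : ∀ z, euclNorm (((Asgn A x)ᵀ * Asgn A x).mulVec z - z) ≤ ε * euclNorm z := by
    intro z
    have h := mulVec_enorm_le (hAmdc x x) z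
    rwa [Matrix.sub_mulVec, Phi_self hx0, Matrix.one_mulVec] at h
  have hGxxz : ∀ z, euclNorm (((Asgn A x)ᵀ * Asgn A x).mulVec z) ≤ (1 + ε) * euclNorm z := by
    intro z
    have h1 := hGxx z
    have h2 : euclNorm (((Asgn A x)ᵀ * Asgn A x).mulVec z)
        ≤ euclNorm (((Asgn A x)ᵀ * Asgn A x).mulVec z - z) + euclNorm z := by
      calc euclNorm (((Asgn A x)ᵀ * Asgn A x).mulVec z)
          = euclNorm ((((Asgn A x)ᵀ * Asgn A x).mulVec z - z) + z) := by
            rw [show (((Asgn A x)ᵀ * Asgn A x).mulVec z - z) + z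
              = ((Asgn A x)ᵀ * Asgn A x).mulVec z by abel]
        _ ≤ _ := euclNorm_add_le _ _
    linarith
  -- angle facts
  set θ := angle' x s with hθ_def
  set c := dotp x s / (euclNorm x * euclNorm s) with hc_def
  have hcabs : |c| ≤ 1 := by
    rw [hc_def, abs_div, abs_of_pos (mul_pos hxpos hsn)]
    exact div_le_one_of_le₀ (abs_dotp_le x s) (le_of_lt (mul_pos hxpos hsn))
  have hcos : Real.cos θ = c := by
    rw [hθ_def]
    unfold angle'
    rw [← hc_def]
    exact Real.cos_arccos (by linarith [(abs_le.mp hcabs).1]) (by linarith [(abs_le.mp hcabs).2])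
  have hθ0 : 0 ≤ θ := Real.arccos_nonneg _
  have hθpi : θ ≤ π := Real.arccos_le_pi _
  -- distance of unit vectors
  have hd_x : d ≤ 1.005 * ε * euclNorm x := by nlinarith
  have huv : euclNorm (unitize x - unitize s) ≤ 2.01 * ε := by
    have hdec : unitize x - unitize s
        = (euclNorm x)⁻¹ • (x - s) + ((euclNorm x)⁻¹ - (euclNorm s)⁻¹) • s := by
      unfold unitize; module
    have habs : |euclNorm s - euclNorm x| ≤ d := by
      rw [abs_sub_le_iff]; constructor <;> linarith
    have hb1 : (euclNorm x)⁻¹ * d ≤ 1.005 * ε := by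
      rw [inv_mul_le_iff₀ hxpos]
      nlinarith
    have hb2 : |(euclNorm x)⁻¹ - (euclNorm s)⁻¹| * euclNorm s ≤ 1.005 * ε := by
      have hid : (euclNorm x)⁻¹ - (euclNorm s)⁻¹ = (euclNorm s - euclNorm x) / (euclNorm x * euclNorm s) := by
        field_simp
      rw [hid, abs_div, abs_of_pos (mul_pos hxpos hsn)]
      rw [div_mul_eq_mul_div, div_le_iff₀ (mul_pos hxpos hsn)]
      calc |euclNorm s - euclNorm x| * euclNorm s ≤ d * euclNorm s :=
            mul_le_mul_of_nonneg_right habs (le_of_lt hsn)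
        _ ≤ (1.005 * ε * euclNorm x) * euclNorm s := mul_le_mul_of_nonneg_right hd_x (le_of_lt hsn)
        _ = 1.005 * ε * (euclNorm x * euclNorm s) := by ring
    calc euclNorm (unitize x - unitize s)
        ≤ euclNorm ((euclNorm x)⁻¹ • (x - s)) + euclNorm (((euclNorm x)⁻¹ - (euclNorm s)⁻¹) • s) := by
          rw [hdec]; exact euclNorm_add_le _ _
      _ = (euclNorm x)⁻¹ * d + |(euclNorm x)⁻¹ - (euclNorm s)⁻¹| * euclNorm s := by
          rw [enorm_smul', enorm_smul', abs_of_pos (inv_pos.mpr hxpos), ← hd_def]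
      _ ≤ 1.005 * ε + 1.005 * ε := add_le_add hb1 hb2
      _ = 2.01 * ε := by ring
  have h1c : 1 - c ≤ 2.1 * ε ^ 2 := by
    have hcc : dotp (unitize x) (unitize s) = c := by
      unfold unitize
      rw [dotp_smul_left, dotp_smul_right, hc_def, div_eq_mul_inv, mul_inv]
      ring
    have hcc' : dotp (unitize s) (unitize x) = c := by rw [dotp_comm, hcc]
    have hexp : dotp (unitize x - unitize s) (unitize x - unitize s) = 2 - 2 * c := by
      rw [dotp_sub_left, dotp_sub_right, dotp_sub_right, dotp_unitize_self hx0,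
        dotp_unitize_self hs, hcc, hcc']
      ring
    have hsq := sq_enorm (unitize x - unitize s)
    rw [hexp] at hsq
    nlinarith [enorm_nonneg' (unitize x - unitize s)]
  have hθ3 : θ ≤ 3 * ε := by
    have hpi3 : (3 : ℝ) < π := by
      have := Real.pi_gt_d6; linarith
    have hpi4 : π ≤ 4 := by
      have := Real.pi_lt_d2; linarith
    by_cases h2 : θ ≤ 2
    · rcases eq_or_lt_of_le hθ0 with h0 | h0
      · rw [← h0]; positivity
      · have hhalf : Real.sin (θ / 2) = Real.sqrt ((1 - Real.cos θ) / 2) :=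
          Real.sin_half_eq_sqrt (by linarith) (by nlinarith)
        have hcube := Real.sin_gt_sub_cube (by linarith : 0 < θ / 2)
        have ht3 : (θ / 2) ^ 3 ≤ θ / 2 := by
          nlinarith [mul_nonneg (mul_nonneg h0.le (by linarith : (0:ℝ) ≤ 2 - θ))
            (by linarith : (0:ℝ) ≤ 2 + θ)]
        have hsin_ge : 3 / 8 * θ ≤ Real.sin (θ / 2) := by nlinarith
        have harg : (1 - Real.cos θ) / 2 ≤ (1.05 * ε) ^ 2 := by
          rw [hcos]; nlinarith
        have hsqrt : Real.sqrt ((1 - Real.cos θ) / 2) ≤ 1.05 * ε := by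
          calc Real.sqrt ((1 - Real.cos θ) / 2) ≤ Real.sqrt ((1.05 * ε) ^ 2) :=
                Real.sqrt_le_sqrt harg
            _ = 1.05 * ε := Real.sqrt_sq (by positivity)
        rw [hhalf] at hsin_ge
        linarith
    · exfalso
      push_neg at h2
      have hcn : Real.cos θ ≤ 0 :=
        Real.cos_nonpos_of_pi_div_two_le_of_le (by linarith) (by nlinarith [Real.pi_pos])
      rw [hcos] at hcn
      nlinarith
  have hsin0 : 0 ≤ Real.sin θ := Real.sin_nonneg_of_nonneg_of_le_pi hθ0 hθpi
  have hsinle : Real.sin θ ≤ θ := Real.sin_le hθ0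
  have hpi_pos : 0 < π := Real.pi_pos
  have hpi3 : (3 : ℝ) < π := by have := Real.pi_gt_d6; linarith
  -- Phi pointwise
  have hPhiz : ∀ z, euclNorm (z - (Phi x s).mulVec z) ≤ 4 * ε * euclNorm z := by
    intro z
    have hPhieq : Phi x s = ((π - 2 * θ) / π) • (1 : Matrix (Fin n) (Fin n) ℝ)
        + (2 * Real.sin θ / π) • Mswap x s := by
      unfold Phi
      rw [if_pos ⟨hx0, hs⟩, ← hθ_def]
    have hmv : (Phi x s).mulVec z
        = ((π - 2 * θ) / π) • z + (2 * Real.sin θ / π) • (Mswap x s).mulVec z := by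
      rw [hPhieq, Matrix.add_mulVec, Matrix.smul_mulVec, Matrix.smul_mulVec,
        Matrix.one_mulVec]
    have hpi' : (π - 2 * θ) / π = 1 - 2 * θ / π := by field_simp
    have hid : z - (((π - 2 * θ) / π) • z + (2 * Real.sin θ / π) • (Mswap x s).mulVec z)
        = (2 * θ / π) • z - (2 * Real.sin θ / π) • (Mswap x s).mulVec z := by
      rw [hpi']; module
    rw [hmv, hid]
    have hM := enorm_Mswap_le hx0 hs z
    have hz0 := enorm_nonneg' z
    have hMz0 := enorm_nonneg' ((Mswap x s).mulVec z)
    have hcoef1 : 2 * θ / π ≤ 2 * ε := by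
      rw [div_le_iff₀ hpi_pos]; nlinarith
    have hcoef2 : 2 * Real.sin θ / π ≤ 2 * ε := by
      rw [div_le_iff₀ hpi_pos]; nlinarith
    have hcoef1' : 0 ≤ 2 * θ / π := by positivity
    have hcoef2' : 0 ≤ 2 * Real.sin θ / π := by positivity
    calc euclNorm ((2 * θ / π) • z - (2 * Real.sin θ / π) • (Mswap x s).mulVec z)
        ≤ euclNorm ((2 * θ / π) • z) + euclNorm ((2 * Real.sin θ / π) • (Mswap x s).mulVec z) :=
          euclNorm_sub_le _ _
      _ = (2 * θ / π) * euclNorm z + (2 * Real.sin θ / π) * euclNorm ((Mswap x s).mulVec z) := by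
          rw [enorm_smul', enorm_smul', abs_of_nonneg hcoef1', abs_of_nonneg hcoef2']
      _ ≤ 2 * ε * euclNorm z + 2 * ε * euclNorm z := by
          apply add_le_add
          · exact mul_le_mul_of_nonneg_right hcoef1 hz0
          · calc (2 * Real.sin θ / π) * euclNorm ((Mswap x s).mulVec z)
                ≤ (2 * Real.sin θ / π) * euclNorm z := mul_le_mul_of_nonneg_left hM hcoef2'
              _ ≤ 2 * ε * euclNorm z := mul_le_mul_of_nonneg_right hcoef2 hz0
      _ = 4 * ε * euclNorm z := by ring
  -- MDC pointwise at (x,s)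
  have hGxs : ∀ z, euclNorm (((Asgn A x)ᵀ * Asgn A s).mulVec z - (Phi x s).mulVec z)
      ≤ ε * euclNorm z := by
    intro z
    have h := mulVec_enorm_le (hAmdc x s) z
    rwa [Matrix.sub_mulVec] at h
  set Q := ((Asgn A x)ᵀ * Asgn A x) - ((Asgn A x)ᵀ * Asgn A s) with hQ_def
  have hQz : ∀ z, euclNorm (Q.mulVec z) ≤ 6 * ε * euclNorm z := by
    intro z
    have hid : Q.mulVec z
        = ((((Asgn A x)ᵀ * Asgn A x).mulVec z - z)
            - (((Asgn A x)ᵀ * Asgn A s).mulVec z - (Phi x s).mulVec z))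
          + (z - (Phi x s).mulVec z) := by
      rw [hQ_def, Matrix.sub_mulVec]; abel
    rw [hid]
    have h1 := hGxx z
    have h2 := hGxs z
    have h3 := hPhiz z
    have h4 := euclNorm_add_le ((((Asgn A x)ᵀ * Asgn A x).mulVec z - z)
            - (((Asgn A x)ᵀ * Asgn A s).mulVec z - (Phi x s).mulVec z))
          (z - (Phi x s).mulVec z)
    have h5 := euclNorm_sub_le (((Asgn A x)ᵀ * Asgn A x).mulVec z - z)
            (((Asgn A x)ᵀ * Asgn A s).mulVec z - (Phi x s).mulVec z)
    linarith
  -- sum representations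
  have hS1 : dotp s (Q.mulVec s)
      = ∑ i, (Real.sign (A.mulVec x i) * Real.sign (A.mulVec x i)
          - Real.sign (A.mulVec x i) * Real.sign (A.mulVec s i)) * (A.mulVec s i) ^ 2 := by
    rw [hQ_def, Matrix.sub_mulVec, dotp_sub_right, dotp_gram, dotp_gram,
      ← Finset.sum_sub_distrib]
    exact Finset.sum_congr rfl fun i _ => by ring
  have hcc0 : ∀ i, 0 ≤ Real.sign (A.mulVec x i) * Real.sign (A.mulVec x i)
      - Real.sign (A.mulVec x i) * Real.sign (A.mulVec s i) :=
    fun i => sign_ineq1 (A.mulVec s i) (A.mulVec x i)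
  have hS1le : (∑ i, (Real.sign (A.mulVec x i) * Real.sign (A.mulVec x i)
          - Real.sign (A.mulVec x i) * Real.sign (A.mulVec s i)) * (A.mulVec s i) ^ 2)
      ≤ 2.002 * d ^ 2 := by
    have hstep : ∀ i : Fin m, (Real.sign (A.mulVec x i) * Real.sign (A.mulVec x i)
          - Real.sign (A.mulVec x i) * Real.sign (A.mulVec s i)) * (A.mulVec s i) ^ 2
        ≤ 2 * ((Real.sign (A.mulVec x i) * A.mulVec (s - x) i)
            * (Real.sign (A.mulVec x i) * A.mulVec (s - x) i)) := by
      intro i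
      have h := sign_ineq2 (A.mulVec s i) (A.mulVec x i)
      have he : A.mulVec (s - x) i = A.mulVec s i - A.mulVec x i := by
        rw [Matrix.mulVec_sub]; rfl
      rw [he]
      nlinarith [h]
    calc (∑ i, (Real.sign (A.mulVec x i) * Real.sign (A.mulVec x i)
          - Real.sign (A.mulVec x i) * Real.sign (A.mulVec s i)) * (A.mulVec s i) ^ 2)
        ≤ ∑ i, 2 * ((Real.sign (A.mulVec x i) * A.mulVec (s - x) i)
            * (Real.sign (A.mulVec x i) * A.mulVec (s - x) i)) :=
          Finset.sum_le_sum fun i _ => hstep i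
      _ = 2 * dotp (s - x) (((Asgn A x)ᵀ * Asgn A x).mulVec (s - x)) := by
          rw [dotp_gram, ← Finset.mul_sum]
      _ ≤ 2 * (euclNorm (s - x) * euclNorm (((Asgn A x)ᵀ * Asgn A x).mulVec (s - x))) := by
          have := dotp_le (s - x) (((Asgn A x)ᵀ * Asgn A x).mulVec (s - x))
          linarith
      _ ≤ 2.002 * d ^ 2 := by
          have h1 := hGxxz (s - x)
          have h2 : euclNorm (s - x) = d := by rw [hd_def, enorm_sub_comm']
          rw [h2] at h1 ⊢
          nlinarith [enorm_nonneg' (((Asgn A x)ᵀ * Asgn A x).mulVec (s - x))]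
  -- bound on r = Q s
  set r := Q.mulVec s with hr_def
  have hrQs : dotp r (Q.mulVec s)
      = ∑ i, (Real.sign (A.mulVec x i) * Real.sign (A.mulVec x i)
          - Real.sign (A.mulVec x i) * Real.sign (A.mulVec s i))
          * (A.mulVec r i * A.mulVec s i) := by
    rw [hQ_def, Matrix.sub_mulVec, dotp_sub_right, dotp_gram, dotp_gram,
      ← Finset.sum_sub_distrib]
    exact Finset.sum_congr rfl fun i _ => by ring
  have hrQr : dotp r (Q.mulVec r)
      = ∑ i, (Real.sign (A.mulVec x i) * Real.sign (A.mulVec x i)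
          - Real.sign (A.mulVec x i) * Real.sign (A.mulVec s i)) * (A.mulVec r i) ^ 2 := by
    rw [hQ_def, Matrix.sub_mulVec, dotp_sub_right, dotp_gram, dotp_gram,
      ← Finset.sum_sub_distrib]
    exact Finset.sum_congr rfl fun i _ => by ring
  have hcs := weighted_cs
    (fun i => Real.sign (A.mulVec x i) * Real.sign (A.mulVec x i)
      - Real.sign (A.mulVec x i) * Real.sign (A.mulVec s i))
    (fun i => A.mulVec r i) (fun i => A.mulVec s i) hcc0
  have hrr_eq : dotp r r = dotp r (Q.mulVec s) := by rw [← hr_def]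
  have hQr_le : dotp r (Q.mulVec r) ≤ 6 * ε * euclNorm r ^ 2 := by
    have h1 := dotp_le r (Q.mulVec r)
    have h2 := hQz r
    have h3 := enorm_nonneg' r
    nlinarith [sq_enorm r]
  have hsum_nonneg : (0 : ℝ) ≤ ∑ i, (Real.sign (A.mulVec x i) * Real.sign (A.mulVec x i)
      - Real.sign (A.mulVec x i) * Real.sign (A.mulVec s i)) * (A.mulVec s i) ^ 2 :=
    Finset.sum_nonneg fun i _ => mul_nonneg (hcc0 i) (sq_nonneg _)
  have hR : euclNorm r ≤ 0.12 * d := by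
    apply scalar_r (enorm_nonneg' r) hd0 hε0 hε1
    have hc1 : (dotp r r) ^ 2 ≤ (6 * ε * euclNorm r ^ 2) * (2.002 * d ^ 2) := by
      rw [hrr_eq, hrQs]
      calc (∑ i, (Real.sign (A.mulVec x i) * Real.sign (A.mulVec x i)
            - Real.sign (A.mulVec x i) * Real.sign (A.mulVec s i))
            * (A.mulVec r i * A.mulVec s i)) ^ 2
          ≤ (∑ i, (Real.sign (A.mulVec x i) * Real.sign (A.mulVec x i)
            - Real.sign (A.mulVec x i) * Real.sign (A.mulVec s i)) * (A.mulVec r i) ^ 2)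
            * (∑ i, (Real.sign (A.mulVec x i) * Real.sign (A.mulVec x i)
            - Real.sign (A.mulVec x i) * Real.sign (A.mulVec s i)) * (A.mulVec s i) ^ 2) :=
            hcs
        _ ≤ (6 * ε * euclNorm r ^ 2) * (2.002 * d ^ 2) := by
            apply mul_le_mul (by rw [← hrQr]; exact hQr_le) hS1le hsum_nonneg
            positivity
    rw [← sq_enorm r] at hc1
    calc euclNorm r ^ 2 * euclNorm r ^ 2 = (euclNorm r ^ 2) ^ 2 := by ring
      _ ≤ 6 * ε * euclNorm r ^ 2 * (2.002 * d ^ 2) := hc1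
  -- noise term
  set W := (Asgn A x)ᵀ.mulVec η with hW_def
  have hWb : euclNorm W ≤ 2 * euclNorm η := by
    rw [hW_def]
    apply noise_aux (Asgn A x) _ η
    intro z
    have h2 : dotp ((Asgn A x).mulVec z) ((Asgn A x).mulVec z)
        = dotp z (((Asgn A x)ᵀ * Asgn A x).mulVec z) := by
      rw [dotp_gram]
      unfold dotp
      refine Finset.sum_congr rfl fun i _ => ?_
      simp only [Asgn_mulVec]
    have h4 := dotp_le z (((Asgn A x)ᵀ * Asgn A x).mulVec z)
    have h5 := hGxxz z
    have h6 := enorm_nonneg' z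
    have h9 := enorm_nonneg' (((Asgn A x)ᵀ * Asgn A x).mulVec z)
    rw [sq_enorm ((Asgn A x).mulVec z), h2, sq_enorm z]
    have h10 : euclNorm z * euclNorm (((Asgn A x)ᵀ * Asgn A x).mulVec z)
        ≤ euclNorm z * ((1 + ε) * euclNorm z) := mul_le_mul_of_nonneg_left h5 h6
    have h11 : euclNorm z * ((1 + ε) * euclNorm z) ≤ 1.001 * dotp z z := by
      rw [← sq_enorm z]
      nlinarith [sq_nonneg (euclNorm z)]
    linarith
  -- decomposition
  have hg : (fun i => |A.mulVec x i| - (|A.mulVec s i| + η i))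
      = (Asgn A x).mulVec x - ((Asgn A s).mulVec s + η) := by
    funext i
    simp only [Pi.sub_apply, Pi.add_apply, Asgn_mulVec, sign_mul_self']
  have hfull : (x - α • (Asgn A x)ᵀ.mulVec
        (fun i => |A.mulVec x i| - (|A.mulVec s i| + η i))) - s
      = ((1 - α) • (x - s)
          + α • ((x - s) - ((Asgn A x)ᵀ * Asgn A x).mulVec (x - s)))
        + (-α) • r + α • W := by
    rw [hg, hr_def, hW_def, hQ_def]
    rw [Matrix.mulVec_sub, Matrix.mulVec_add, Matrix.mulVec_mulVec, Matrix.mulVec_mulVec,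
      Matrix.sub_mulVec, Matrix.mulVec_sub]
    module
  rw [hfull]
  have hE1 : euclNorm ((1 - α) • (x - s)
      + α • ((x - s) - ((Asgn A x)ᵀ * Asgn A x).mulVec (x - s)))
      ≤ (1 - α) * d + α * (ε * d) := by
    have h1 : euclNorm ((x - s) - ((Asgn A x)ᵀ * Asgn A x).mulVec (x - s)) ≤ ε * d := by
      rw [enorm_sub_comm']
      exact hGxx (x - s)
    calc euclNorm ((1 - α) • (x - s)
        + α • ((x - s) - ((Asgn A x)ᵀ * Asgn A x).mulVec (x - s)))
        ≤ euclNorm ((1 - α) • (x - s))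
          + euclNorm (α • ((x - s) - ((Asgn A x)ᵀ * Asgn A x).mulVec (x - s))) :=
          euclNorm_add_le _ _
      _ = |1 - α| * d + |α| * euclNorm ((x - s) - ((Asgn A x)ᵀ * Asgn A x).mulVec (x - s)) := by
          rw [enorm_smul', enorm_smul', ← hd_def]
      _ ≤ (1 - α) * d + α * (ε * d) := by
          rw [abs_of_nonneg (by linarith : (0:ℝ) ≤ 1 - α), abs_of_pos hα0]
          exact add_le_add le_rfl (mul_le_mul_of_nonneg_left h1 (le_of_lt hα0))
  calc euclNorm (((1 - α) • (x - s)
        + α • ((x - s) - ((Asgn A x)ᵀ * Asgn A x).mulVec (x - s)))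
        + (-α) • r + α • W)
      ≤ euclNorm (((1 - α) • (x - s)
          + α • ((x - s) - ((Asgn A x)ᵀ * Asgn A x).mulVec (x - s)))
          + (-α) • r) + euclNorm (α • W) := euclNorm_add_le _ _
    _ ≤ (euclNorm ((1 - α) • (x - s)
          + α • ((x - s) - ((Asgn A x)ᵀ * Asgn A x).mulVec (x - s)))
          + euclNorm ((-α) • r)) + euclNorm (α • W) :=
        add_le_add_left (euclNorm_add_le _ _) _
    _ ≤ ((1 - α) * d + α * (ε * d) + α * (0.12 * d)) + α * (2 * euclNorm η) := by
        rw [enorm_smul', enorm_smul', abs_neg, abs_of_pos hα0]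
        have h1 := mul_le_mul_of_nonneg_left hR (le_of_lt hα0)
        have h2 := mul_le_mul_of_nonneg_left hWb (le_of_lt hα0)
        have h3 := hE1
        linarith
    _ = (1 - α) * d + α * (ε * d) + α * (0.12 * d) + α * (2 * euclNorm η) := by ring
    _ ≤ (1 - α / 2) * d + 2 * α * euclNorm η :=
        final_arith hα0 hα1 hd0 hε0 hε1


lemma enorm_zero'' {n : ℕ} : euclNorm (0 : Fin n → ℝ) = 0 := by
  simp [euclNorm]

/-- **Deterministic Local Convergence Guarantee.**
If `A` satisfies the MDC with constant `ε ≤ 0.001`, the noise is small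
(`‖η‖ ≤ (ε/4)‖x_*‖`), the step size satisfies `0 < α ≤ 1`, and the initializer satisfies
`dist(x₀, x_*) ≤ ε‖x_*‖`, then subgradient descent for the amplitude flow objective
converges linearly, up to the noise level. -/
theorem deterministic_local_convergence {m n : ℕ}
    (ε : ℝ) (hε0 : 0 < ε) (hε1 : ε ≤ 0.001)
    (A : Matrix (Fin m) (Fin n) ℝ) (hAmdc : MDC A ε)
    (xstar : Fin n → ℝ) (η : Fin m → ℝ)
    (y : Fin m → ℝ) (hy : y = fun i => |A.mulVec xstar i| + η i)
    (hη : euclNorm η ≤ (ε / 4) * euclNorm xstar)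
    (α : ℝ) (hα0 : 0 < α) (hα1 : α ≤ 1)
    (x : ℕ → Fin n → ℝ)
    (hiter : ∀ t, x (t + 1) =
      x t - α • (Asgn A (x t))ᵀ.mulVec (fun i => |A.mulVec (x t) i| - y i))
    (hinit : pdist (x 0) xstar ≤ ε * euclNorm xstar) :
    ∀ t : ℕ, 1 ≤ t →
      pdist (x t) xstar ≤ (1 - α / 2) ^ t * pdist (x 0) xstar + 4 * euclNorm η := by
  by_cases hxs : xstar = 0
  · subst hxs
    have hη0 : euclNorm η = 0 := by
      have h1 := hη
      rw [enorm_zero''] at h1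
      have := enorm_nonneg' η
      linarith [h1]
    have hηzero : η = 0 := by
      by_contra h
      exact absurd hη0 (ne_of_gt (enorm_pos_of_ne h))
    have hx00 : x 0 = 0 := by
      have h1 : pdist (x 0) 0 ≤ 0 := by
        have := hinit
        rwa [enorm_zero'', mul_zero] at this
      have h2 : euclNorm (x 0) ≤ 0 := by
        have : pdist (x 0) 0 = euclNorm (x 0) := by
          simp [pdist]
        linarith [this ▸ h1]
      by_contra h
      exact absurd (le_antisymm h2 (enorm_nonneg' _)).symm
        (ne_of_gt (enorm_pos_of_ne h)).symm
    have hall : ∀ t, x t = 0 := by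
      intro t
      induction t with
      | zero => exact hx00
      | succ t ih =>
        rw [hiter t, ih]
        have hv : (fun i => |A.mulVec (0 : Fin n → ℝ) i| - y i) = (0 : Fin m → ℝ) := by
          funext i
          rw [hy, hηzero]
          simp [Matrix.mulVec_zero]
        rw [hv, Matrix.mulVec_zero, smul_zero, sub_zero]
    intro t _
    rw [hall t, hall 0, hη0]
    simp [pdist, enorm_zero'']
  · set N := euclNorm η with hN_def
    set β := 1 - α / 2 with hβ_def
    have hβ0 : 0 ≤ β := by rw [hβ_def]; linarith
    have hβ1 : β ≤ 1 := by rw [hβ_def]; linarith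
    have hN0 : 0 ≤ N := enorm_nonneg' η
    have hs_pos : 0 < euclNorm xstar := enorm_pos_of_ne hxs
    have h4N : 4 * N ≤ ε * euclNorm xstar := by rw [hN_def]; linarith
    have hinv : ∀ t, pdist (x t) xstar ≤ β ^ t * pdist (x 0) xstar + (4 - 4 * β ^ t) * N := by
      intro t
      induction t with
      | zero => simp
      | succ t ih =>
        have hβt0 : 0 ≤ β ^ t := pow_nonneg hβ0 t
        have hβt1 : β ^ t ≤ 1 := pow_le_one₀ hβ0 hβ1
        have hcur : pdist (x t) xstar ≤ ε * euclNorm xstar := by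
          have h1 : β ^ t * pdist (x 0) xstar ≤ β ^ t * (ε * euclNorm xstar) :=
            mul_le_mul_of_nonneg_left hinit hβt0
          have h2 : (4 - 4 * β ^ t) * N ≤ (1 - β ^ t) * (ε * euclNorm xstar) := by
            have h3 : (1 - β ^ t) * (4 * N) ≤ (1 - β ^ t) * (ε * euclNorm xstar) :=
              mul_le_mul_of_nonneg_left h4N (by linarith)
            nlinarith
          nlinarith [ih]
        have hstep : pdist (x (t + 1)) xstar ≤ β * pdist (x t) xstar + 2 * α * N := by
          rcases min_cases (euclNorm (x t - xstar)) (euclNorm (x t + xstar)) with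
            ⟨heq, _⟩ | ⟨heq, _⟩
          · -- closer to xstar
            have hdx : euclNorm (x t - xstar) ≤ ε * euclNorm xstar := by
              have : pdist (x t) xstar = euclNorm (x t - xstar) := heq
              linarith [this ▸ hcur]
            have hks := key_step hε0 hε1 hAmdc hxs η hα0 hα1 hdx
            have hx1 : x (t + 1) = x t - α • (Asgn A (x t))ᵀ.mulVec
                (fun i => |A.mulVec (x t) i| - (|A.mulVec xstar i| + η i)) := by
              rw [hiter t, hy]
            have hfin : pdist (x (t + 1)) xstar ≤ euclNorm (x (t + 1) - xstar) :=
              min_le_left _ _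
            rw [hx1] at hfin
            have := le_trans hfin hks
            rw [← hx1] at this
            calc pdist (x (t + 1)) xstar
                ≤ (1 - α / 2) * euclNorm (x t - xstar) + 2 * α * euclNorm η := by
                  rw [hx1]; exact le_trans hfin hks
              _ = β * pdist (x t) xstar + 2 * α * N := by
                  have hp : pdist (x t) xstar = euclNorm (x t - xstar) := heq
                  rw [← hβ_def, ← hN_def, ← hp]
          · -- closer to -xstar
            have hs' : -xstar ≠ 0 := neg_ne_zero.mpr hxs
            have hens : euclNorm (-xstar) = euclNorm xstar := enorm_neg' xstar
            have hdx : euclNorm (x t - -xstar) ≤ ε * euclNorm (-xstar) := by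
              rw [sub_neg_eq_add, hens]
              have : pdist (x t) xstar = euclNorm (x t + xstar) := heq
              linarith [this ▸ hcur]
            have hks := key_step hε0 hε1 hAmdc hs' η hα0 hα1 hdx
            have habs : (fun i => |A.mulVec (x t) i| - (|A.mulVec (-xstar) i| + η i))
                = (fun i => |A.mulVec (x t) i| - (|A.mulVec xstar i| + η i)) := by
              funext i
              rw [Matrix.mulVec_neg]
              simp
            rw [habs] at hks
            have hx1 : x (t + 1) = x t - α • (Asgn A (x t))ᵀ.mulVec
                (fun i => |A.mulVec (x t) i| - (|A.mulVec xstar i| + η i)) := by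
              rw [hiter t, hy]
            have hfin : pdist (x (t + 1)) xstar ≤ euclNorm (x (t + 1) - -xstar) := by
              rw [sub_neg_eq_add]
              exact min_le_right _ _
            calc pdist (x (t + 1)) xstar
                ≤ (1 - α / 2) * euclNorm (x t - -xstar) + 2 * α * euclNorm η := by
                  rw [hx1] at hfin ⊢
                  exact le_trans hfin hks
              _ = β * pdist (x t) xstar + 2 * α * N := by
                  have hp : pdist (x t) xstar = euclNorm (x t + xstar) := heq
                  rw [← hβ_def, ← hN_def, sub_neg_eq_add, ← hp]
        calc pdist (x (t + 1)) xstar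
            ≤ β * pdist (x t) xstar + 2 * α * N := hstep
          _ ≤ β * (β ^ t * pdist (x 0) xstar + (4 - 4 * β ^ t) * N) + 2 * α * N :=
              add_le_add_left (mul_le_mul_of_nonneg_left ih hβ0) _
          _ = β ^ (t + 1) * pdist (x 0) xstar + (4 - 4 * β ^ (t + 1)) * N := by
              rw [hβ_def]; ring
    intro t _
    have hβt0 : 0 ≤ β ^ t := pow_nonneg hβ0 t
    calc pdist (x t) xstar ≤ β ^ t * pdist (x 0) xstar + (4 - 4 * β ^ t) * N := hinv t
      _ ≤ β ^ t * pdist (x 0) xstar + 4 * N := by nlinarith
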